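/- arXiv:0902.1409 — 3 statements merged into one kernel-verified Lean document; each statement's English description precedes it below -/
import Mathlib

section
/- Fix α ∈ (0,1/2). For every h₀ ∈ Ḣ^{1/2} one has K₀(t) → 0 as t → 0. Moreover, for each β ∈ [1/2, 1+α] there is a constant c_β > 0 such that K₀(t) ≤ c_β t^{(2β−1)/8} |h₀|_β for all h₀ ∈ Ḣ^β and all t > 0. -/
open MeasureTheory Filter Topology Set
open scoped ENNReal
noncomputable section

/-- `k`-th Fourier coefficient of an `L`-periodic function `f : ℝ → ℝ`. -/
def fCoeff (L : ℝ) (f : ℝ → ℝ) (k : ℤ) : ℂ :=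
  (1 / (L : ℂ)) * ∫ x in (0:ℝ)..L,
    (f x : ℂ) * Complex.exp (-2 * (Real.pi : ℂ) * Complex.I * (k : ℂ) * (x : ℂ) / (L : ℂ))

/-- Membership in the homogeneous Sobolev space `Ḣ^α` of real-valued, `L`-periodic,
zero-mean functions, described through the sequence of Fourier coefficients. -/
structure InHdot (α : ℝ) (u : ℤ → ℂ) : Prop where
  zero : u 0 = 0
  conjSymm : ∀ k : ℤ, u (-k) = starRingEnd ℂ (u k)
  summable : Summable fun k : ℤ => |(k : ℝ)| ^ (2 * α) * ‖u k‖ ^ 2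

/-- The homogeneous Sobolev norm `|u|_α = (∑_{k≠0} |k|^{2α}|u_k|²)^{1/2}`. -/
def Hnorm (α : ℝ) (u : ℤ → ℂ) : ℝ :=
  Real.sqrt (∑' k : ℤ, |(k : ℝ)| ^ (2 * α) * ‖u k‖ ^ 2)

/-- The constant `c = (2π/L)^4` appearing in the semigroup `e^{-tA}`, `A = ∂_x^4`. -/
def csg (L : ℝ) : ℝ := (2 * Real.pi / L) ^ 4

/-- The analytic semigroup `e^{-tA}`, acting diagonally on Fourier coefficients. -/
def heatSG (L t : ℝ) (u : ℤ → ℂ) : ℤ → ℂ :=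
  fun k => Real.exp (-(csg L) * t * (k : ℝ) ^ 4) • u k

/-- Fourier coefficients of the nonlinearity `∂_x^2((∂_x h)^2)`. -/
def nonlin (L : ℝ) (u : ℤ → ℂ) : ℤ → ℂ :=
  fun k => (csg L * (k : ℝ) ^ 2) • ∑' l : ℤ, ((l : ℂ) * ((k - l : ℤ) : ℂ)) * u l * u (k - l)

/-- The mild solution map
`F(h)(t) = e^{-tA}h₀ - ∫₀ᵗ e^{-(t-s)A} ∂_x^2((∂_x h(s))^2) ds`. -/
def mildMap (L : ℝ) (h0 : ℤ → ℂ) (h : ℝ → ℤ → ℂ) (t : ℝ) : ℤ → ℂ :=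
  fun k => heatSG L t h0 k -
    ∫ s in (0:ℝ)..t, Real.exp (-(csg L) * (t - s) * (k : ℝ) ^ 4) • nonlin L (h s) k

/-- The weight `s^{(2α+1)/8}|u|_{1+α}`. -/
def wnorm (α s : ℝ) (u : ℤ → ℂ) : ℝ := s ^ ((2 * α + 1) / 8) * Hnorm (1 + α) u

/-- `Kfun α h t = sup_{s ∈ (0,t]} s^{(2α+1)/8}|h(s)|_{1+α}`; in particular
`K₀(t) = Kfun α (fun s => heatSG L s h₀) t` and `‖h‖_{α,T} = Kfun α h T`. -/
def Kfun (α : ℝ) (h : ℝ → ℤ → ℂ) (t : ℝ) : ℝ :=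
  sSup ((fun s => wnorm α s (h s)) '' Set.Ioc 0 t)

/-- The space `S_α(T)`: continuity `(0,T] → Ḣ^{1+α}` together with finiteness of
the weighted sup-norm `‖·‖_{α,T}`. -/
def MemS (α T : ℝ) (h : ℝ → ℤ → ℂ) : Prop :=
  (∀ t ∈ Set.Ioc (0:ℝ) T, InHdot (1 + α) (h t)) ∧
  (∀ t ∈ Set.Ioc (0:ℝ) T, ∀ ε > 0, ∃ δ > 0, ∀ s ∈ Set.Ioc (0:ℝ) T,
      |s - t| < δ → Hnorm (1 + α) (h s - h t) < ε) ∧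
  BddAbove ((fun s => wnorm α s (h s)) '' Set.Ioc 0 T)

/-!
The semigroup acts on the `k`-th Fourier mode by the factor `e^{-cs k⁴}`. Since `y^a ≤ e^y` for
`a ∈ [0,1]`, one has `|k|^γ e^{-cs k⁴} ≤ (cs)^{-γ/4}` for `γ ∈ [0,4]`, which is the smoothing
estimate `|e^{-sA}h|_{β'} ≤ (cs)^{-(β'-β)/4} |h|_β`. With `β' = 1+α` it bounds the weight
`s^{(2α+1)/8}|e^{-sA}h₀|_{1+α}` by `c^{-(1+α-β)/4} s^{(2β-1)/8} |h₀|_β`, which is nondecreasing in `s`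
for `β ≥ 1/2`. For `β = 1/2` this bound does not decay, but every single Fourier mode of the weight
is killed by the factor `s^{(2α+1)/8}`, so the weight tends to `0` by dominated convergence, and
then so does its supremum over `(0,t]`.
-/

lemma Real.rpow_le_exp_self {y a : ℝ} (hy : 0 ≤ y) (ha₀ : 0 ≤ a) (ha₁ : a ≤ 1) :
    y ^ a ≤ Real.exp y := by
  rcases le_total y 1 with hy₁ | hy₁
  · exact (Real.rpow_le_one hy hy₁ ha₀).trans (Real.one_le_exp hy)
  · calc y ^ a ≤ y := Real.rpow_le_self_of_one_le hy₁ ha₁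
      _ ≤ y + 1 := by linarith
      _ ≤ Real.exp y := Real.add_one_le_exp y

lemma rpow_mul_exp_neg_mul_pow_four_le {x c γ : ℝ} (hx : 0 ≤ x) (hc : 0 < c)
    (hγ₀ : 0 ≤ γ) (hγ₄ : γ ≤ 4) :
    x ^ γ * Real.exp (-c * x ^ 4) ≤ c ^ (-(γ / 4)) := by
  have hx₄ : 0 ≤ x ^ 4 := by positivity
  have hsplit : x ^ γ = c ^ (-(γ / 4)) * (c * x ^ 4) ^ (γ / 4) := by
    rw [Real.mul_rpow hc.le hx₄, ← mul_assoc, ← Real.rpow_add hc, neg_add_cancel, Real.rpow_zero,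
      one_mul, ← Real.rpow_natCast, ← Real.rpow_mul hx]
    ring_nf
  calc x ^ γ * Real.exp (-c * x ^ 4)
      ≤ c ^ (-(γ / 4)) * Real.exp (c * x ^ 4) * Real.exp (-c * x ^ 4) := by
        rw [hsplit]
        gcongr
        exact Real.rpow_le_exp_self (by positivity) (by positivity) (by linarith)
    _ = c ^ (-(γ / 4)) := by rw [mul_assoc, ← Real.exp_add, neg_mul, add_neg_cancel,
        Real.exp_zero, mul_one]

lemma csg_pos {L : ℝ} (hL : 0 < L) : 0 < csg L := by
  unfold csg
  have := Real.pi_pos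
  positivity

section Smoothing

variable {L s β β' : ℝ}

lemma norm_heatSG_apply (u : ℤ → ℂ) (k : ℤ) :
    ‖heatSG L s u k‖ = Real.exp (-(csg L * s) * (k : ℝ) ^ 4) * ‖u k‖ := by
  rw [heatSG, norm_smul, Real.norm_of_nonneg (Real.exp_pos _).le, neg_mul]

lemma rpow_mul_sq_norm_heatSG_le (hL : 0 < L) (hs : 0 < s) (hβ : 0 ≤ β) (hββ' : β ≤ β')
    (hβ' : β' ≤ β + 4) (u : ℤ → ℂ) (k : ℤ) :
    |(k : ℝ)| ^ (2 * β') * ‖heatSG L s u k‖ ^ 2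
      ≤ (csg L * s) ^ (-((β' - β) / 2)) * (|(k : ℝ)| ^ (2 * β) * ‖u k‖ ^ 2) := by
  have hcs : 0 < csg L * s := mul_pos (csg_pos hL) hs
  have hmult := rpow_mul_exp_neg_mul_pow_four_le (abs_nonneg (k : ℝ)) hcs
    (sub_nonneg.2 hββ') (by linarith)
  rw [(by decide : Even 4).pow_abs] at hmult
  have hk : |(k : ℝ)| ^ (2 * β') = |(k : ℝ)| ^ (2 * β) * (|(k : ℝ)| ^ (β' - β)) ^ 2 := by
    rw [← Real.rpow_natCast, ← Real.rpow_mul (abs_nonneg _), ← Real.rpow_add_of_nonneg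
      (abs_nonneg _) (by positivity) (by push_cast; linarith)]
    ring_nf
  have hc : (csg L * s) ^ (-((β' - β) / 2)) = ((csg L * s) ^ (-((β' - β) / 4))) ^ 2 := by
    rw [← Real.rpow_natCast, ← Real.rpow_mul hcs.le]
    ring_nf
  rw [norm_heatSG_apply, hk, hc]
  calc |(k : ℝ)| ^ (2 * β) * (|(k : ℝ)| ^ (β' - β)) ^ 2
        * (Real.exp (-(csg L * s) * (k : ℝ) ^ 4) * ‖u k‖) ^ 2
      = (|(k : ℝ)| ^ (β' - β) * Real.exp (-(csg L * s) * (k : ℝ) ^ 4)) ^ 2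
        * (|(k : ℝ)| ^ (2 * β) * ‖u k‖ ^ 2) := by ring
    _ ≤ _ := by gcongr

lemma Hnorm_heatSG_le (hL : 0 < L) (hs : 0 < s) (hβ : 0 ≤ β) (hββ' : β ≤ β')
    (hβ' : β' ≤ β + 4) {u : ℤ → ℂ}
    (hu : Summable fun k : ℤ => |(k : ℝ)| ^ (2 * β) * ‖u k‖ ^ 2) :
    Hnorm β' (heatSG L s u) ≤ (csg L * s) ^ (-((β' - β) / 4)) * Hnorm β u := by
  have hcs : 0 < csg L * s := mul_pos (csg_pos hL) hs
  have hterm := rpow_mul_sq_norm_heatSG_le hL hs hβ hββ' hβ' u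
  have hsum : ∑' k : ℤ, |(k : ℝ)| ^ (2 * β') * ‖heatSG L s u k‖ ^ 2
      ≤ (csg L * s) ^ (-((β' - β) / 2)) * ∑' k : ℤ, |(k : ℝ)| ^ (2 * β) * ‖u k‖ ^ 2 := by
    rw [← tsum_mul_left]
    have hu' := hu.mul_left ((csg L * s) ^ (-((β' - β) / 2)))
    exact (hu'.of_nonneg_of_le (fun k => by positivity) hterm).tsum_le_tsum hterm hu'
  have hsqrt : √((csg L * s) ^ (-((β' - β) / 2))) = (csg L * s) ^ (-((β' - β) / 4)) := by
    rw [Real.sqrt_eq_rpow, ← Real.rpow_mul hcs.le]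
    ring_nf
  unfold Hnorm
  calc √(∑' k : ℤ, |(k : ℝ)| ^ (2 * β') * ‖heatSG L s u k‖ ^ 2)
      ≤ √((csg L * s) ^ (-((β' - β) / 2)) * ∑' k : ℤ, |(k : ℝ)| ^ (2 * β) * ‖u k‖ ^ 2) :=
        Real.sqrt_le_sqrt hsum
    _ = _ := by rw [Real.sqrt_mul (by positivity), hsqrt]

end Smoothing

lemma wnorm_heatSG_le {L α β s : ℝ} (hL : 0 < L) (hs : 0 < s) (hβ : 0 ≤ β) (hβα : β ≤ 1 + α)
    (hαβ : 1 + α ≤ β + 4) {u : ℤ → ℂ}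
    (hu : Summable fun k : ℤ => |(k : ℝ)| ^ (2 * β) * ‖u k‖ ^ 2) :
    wnorm α s (heatSG L s u) ≤ csg L ^ (-((1 + α - β) / 4)) * s ^ ((2 * β - 1) / 8) * Hnorm β u := by
  calc wnorm α s (heatSG L s u)
      ≤ s ^ ((2 * α + 1) / 8) * ((csg L * s) ^ (-((1 + α - β) / 4)) * Hnorm β u) := by
        unfold wnorm
        gcongr
        exact Hnorm_heatSG_le hL hs hβ hβα hαβ hu
    _ = csg L ^ (-((1 + α - β) / 4)) * (s ^ ((2 * α + 1) / 8) * s ^ (-((1 + α - β) / 4)))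
          * Hnorm β u := by
        rw [Real.mul_rpow (csg_pos hL).le hs.le]
        ring
    _ = _ := by
        rw [← Real.rpow_add hs]
        ring_nf

lemma Kfun_heatSG_le {L α β t : ℝ} (hL : 0 < L) (ht : 0 < t) (hβ : 1 / 2 ≤ β) (hβα : β ≤ 1 + α)
    (hαβ : 1 + α ≤ β + 4) {u : ℤ → ℂ}
    (hu : Summable fun k : ℤ => |(k : ℝ)| ^ (2 * β) * ‖u k‖ ^ 2) :
    Kfun α (fun s => heatSG L s u) t
      ≤ csg L ^ (-((1 + α - β) / 4)) * t ^ ((2 * β - 1) / 8) * Hnorm β u := by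
  have hHnorm : 0 ≤ Hnorm β u := Real.sqrt_nonneg _
  have hc := csg_pos hL
  refine Real.sSup_le ?_ (by positivity)
  rintro _ ⟨s, ⟨hs, hst⟩, rfl⟩
  refine (wnorm_heatSG_le hL hs (by linarith) hβα hαβ hu).trans ?_
  gcongr
  linarith

lemma tendsto_sSup_image_Ioc {f : ℝ → ℝ} {a l : ℝ} (hf : Tendsto f (𝓝[>] a) (𝓝 l)) :
    Tendsto (fun t => sSup (f '' Ioc a t)) (𝓝[>] a) (𝓝 l) := by
  rw [Metric.tendsto_nhdsWithin_nhds] at hf ⊢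
  intro ε hε
  obtain ⟨δ, hδ, hfδ⟩ := hf (ε / 2) (half_pos hε)
  refine ⟨δ, hδ, fun t ht htδ => ?_⟩
  have himage : f '' Ioc a t ⊆ Metric.closedBall l (ε / 2) := by
    rintro _ ⟨s, ⟨has, hst⟩, rfl⟩
    have hdist : dist s a ≤ dist t a := by
      rw [Real.dist_eq, Real.dist_eq, abs_of_pos (sub_pos.2 has), abs_of_pos (sub_pos.2 ht)]
      linarith
    exact (hfδ has (hdist.trans_lt htδ)).le
  have hne : (f '' Ioc a t).Nonempty := ⟨f t, t, ⟨ht, le_rfl⟩, rfl⟩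
  have hbdd : BddAbove (f '' Ioc a t) := (Metric.isBounded_closedBall.subset himage).bddAbove
  have hmem : sSup (f '' Ioc a t) ∈ Metric.closedBall l (ε / 2) :=
    Metric.isClosed_closedBall.closure_subset_iff.2 himage (csSup_mem_closure hne hbdd)
  exact (Metric.mem_closedBall.1 hmem).trans_lt (half_lt_self hε)

lemma tendsto_wnorm_heatSG_nhdsGT_zero {L α : ℝ} (hL : 0 < L) (hα : -(1 / 2) < α)
    (hα' : α ≤ 7 / 2) {u : ℤ → ℂ}
    (hu : Summable fun k : ℤ => |(k : ℝ)| ^ (2 * (1 / 2 : ℝ)) * ‖u k‖ ^ 2) :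
    Tendsto (fun s => wnorm α s (heatSG L s u)) (𝓝[>] 0) (𝓝 0) := by
  set F : ℝ → ℤ → ℝ := fun s k =>
    s ^ ((2 * α + 1) / 4) * (|(k : ℝ)| ^ (2 * (1 + α)) * ‖heatSG L s u k‖ ^ 2)
  have hwnorm : ∀ s > 0, wnorm α s (heatSG L s u) = √(∑' k, F s k) := by
    intro s hs
    rw [tsum_mul_left, Real.sqrt_mul (by positivity), Real.sqrt_eq_rpow, ← Real.rpow_mul hs.le]
    unfold wnorm Hnorm
    ring_nf
  have hmode : ∀ k, Tendsto (F · k) (𝓝[>] 0) (𝓝 0) := by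
    intro k
    have hcont : Continuous (F · k) :=
      (Real.continuous_rpow_const (by linarith)).mul (continuous_const.mul (by
        unfold heatSG
        fun_prop))
    simpa [F, Real.zero_rpow (by linarith : (2 * α + 1) / 4 ≠ 0)] using
      (hcont.tendsto 0).mono_left nhdsWithin_le_nhds
  have hdom : ∀ᶠ s in 𝓝[>] 0, ∀ k, ‖F s k‖
      ≤ csg L ^ (-((2 * α + 1) / 4)) * (|(k : ℝ)| ^ (2 * (1 / 2 : ℝ)) * ‖u k‖ ^ 2) := by
    filter_upwards [self_mem_nhdsWithin] with s (hs : 0 < s) k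
    rw [Real.norm_of_nonneg (by positivity)]
    have hweight : s ^ ((2 * α + 1) / 4) * (csg L * s) ^ (-((1 + α - 1 / 2) / 2))
        = csg L ^ (-((2 * α + 1) / 4)) := by
      rw [Real.mul_rpow (csg_pos hL).le hs.le, mul_left_comm, ← Real.rpow_add hs]
      ring_nf
      rw [Real.rpow_zero, mul_one]
    calc F s k ≤ s ^ ((2 * α + 1) / 4) * ((csg L * s) ^ (-((1 + α - 1 / 2) / 2))
          * (|(k : ℝ)| ^ (2 * (1 / 2 : ℝ)) * ‖u k‖ ^ 2)) :=
          mul_le_mul_of_nonneg_left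
            (rpow_mul_sq_norm_heatSG_le hL hs (by norm_num) (by linarith) (by linarith) u k)
            (by positivity)
      _ = _ := by rw [← mul_assoc, hweight]
  have hsum := tendsto_tsum_of_dominated_convergence (hu.mul_left _) hmode hdom
  rw [tsum_zero] at hsum
  have hsqrt := ((Real.continuous_sqrt.tendsto 0).comp hsum).congr'
    (eventually_mem_nhdsWithin.mono fun s hs => (hwnorm s hs).symm)
  rwa [Real.sqrt_zero] at hsqrt

/-- For `h₀ ∈ Ḣ^{1/2}`, `K₀(t) → 0` as `t → 0`; moreover for each
`β ∈ [1/2, 1+α]` there is `c_β > 0` with `K₀(t) ≤ c_β t^{(2β-1)/8}|h₀|_β`. -/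
theorem surfaceGrowth_K0_estimates (L : ℝ) (hL : 0 < L)
    (α : ℝ) (hα : α ∈ Set.Ioo (0:ℝ) (1/2)) :
    (∀ h0 : ℤ → ℂ, InHdot (1/2) h0 →
      Tendsto (fun t => Kfun α (fun s => heatSG L s h0) t)
        (nhdsWithin 0 (Set.Ioi 0)) (nhds 0)) ∧
    (∀ β ∈ Set.Icc (1/2 : ℝ) (1 + α), ∃ c > 0, ∀ h0 : ℤ → ℂ, InHdot β h0 →
      ∀ t > (0:ℝ), Kfun α (fun s => heatSG L s h0) t ≤ c * t ^ ((2 * β - 1) / 8) * Hnorm β h0) := by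
  obtain ⟨hα₀, hα₁⟩ := hα
  refine ⟨fun h0 hh0 => ?_, fun β ⟨hβ, hβα⟩ => ?_⟩
  · exact tendsto_sSup_image_Ioc
      (tendsto_wnorm_heatSG_nhdsGT_zero hL (by linarith) (by linarith) hh0.summable)
  · refine ⟨csg L ^ (-((1 + α - β) / 4)), Real.rpow_pos_of_pos (csg_pos hL) _,
      fun h0 hh0 t ht => ?_⟩
    exact Kfun_heatSG_le hL ht hβ hβα (by linarith) hh0.summable
end
end

section
/- Let h ∈ C^∞([0,τ)×[0,L]) be a smooth local solution of the surface growth equation with ∫₀^L h(0,x)³ dx finite. If ∫₀ᵀ ∫₀^L (∂_x h)⁴ dx dt → ∞ as T ↑ τ, then the negative part of h blows up: there exist sequences t_n ↑ τ and x_n ∈ [0,L] such that h(t_n, x_n) → −∞. -/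
open MeasureTheory Filter Topology Set
open scoped ENNReal
noncomputable section

/-- `L`-periodicity and zero spatial average of a profile `f : ℝ → ℝ`. -/
def PeriodicZeroMean (L : ℝ) (f : ℝ → ℝ) : Prop :=
  (∀ x : ℝ, f (x + L) = f x) ∧ (∫ x in (0:ℝ)..L, f x) = 0

/-- The surface growth equation `∂_t h = -∂_x^4 h - ∂_x^2((∂_x h)^2)` holds
pointwise at time `t`. -/
def SGEq (h : ℝ → ℝ → ℝ) (t : ℝ) : Prop :=
  ∀ x : ℝ, HasDerivAt (fun τ => h τ x)
    (-(iteratedDeriv 4 (h t) x) - iteratedDeriv 2 (fun y => deriv (h t) y ^ 2) x) t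

section Aux

lemma one_le_inf : (1 : WithTop ℕ∞) ≤ ((⊤ : ℕ∞) : WithTop ℕ∞) := by exact_mod_cast le_top

lemma deriv_periodic {L : ℝ} {u : ℝ → ℝ} (hu : Differentiable ℝ u)
    (hp : Function.Periodic u L) : Function.Periodic (deriv u) L := by
  intro x
  have h1 : HasDerivAt (fun y : ℝ => u (y + L)) (deriv u (x + L) * 1) x :=
    (hu (x + L)).hasDerivAt.comp x ((hasDerivAt_id x).add_const L)
  have h2 : (fun y : ℝ => u (y + L)) = u := funext fun y => hp y
  rw [h2] at h1
  simpa using h1.deriv.symm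

lemma itd2 (f : ℝ → ℝ) : iteratedDeriv 2 f = deriv (deriv f) := by
  rw [iteratedDeriv_succ, iteratedDeriv_one]

lemma itd3 (f : ℝ → ℝ) : iteratedDeriv 3 f = deriv (deriv (deriv f)) := by
  rw [iteratedDeriv_succ, itd2]

lemma itd4 (f : ℝ → ℝ) : iteratedDeriv 4 f = deriv (deriv (deriv (deriv f))) := by
  rw [iteratedDeriv_succ, itd3]

lemma iter2_sq {u : ℝ → ℝ} (hu : ContDiff ℝ ((⊤ : ℕ∞) : WithTop ℕ∞) u) (x : ℝ) :
    iteratedDeriv 2 (fun y => deriv u y ^ 2) x =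
      2 * (iteratedDeriv 2 u x) ^ 2 + 2 * deriv u x * iteratedDeriv 3 u x := by
  have h1 : ContDiff ℝ ((⊤ : ℕ∞) : WithTop ℕ∞) (deriv u) := (contDiff_infty_iff_deriv.mp hu).2
  have h2 : ContDiff ℝ ((⊤ : ℕ∞) : WithTop ℕ∞) (deriv (deriv u)) := (contDiff_infty_iff_deriv.mp h1).2
  have hd1 : ∀ y, HasDerivAt (deriv u) (deriv (deriv u) y) y := fun y =>
    ((h1.differentiable (by simp)) y).hasDerivAt
  have hd2 : ∀ y, HasDerivAt (deriv (deriv u)) (deriv (deriv (deriv u)) y) y := fun y =>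
    ((h2.differentiable (by simp)) y).hasDerivAt
  have e1 : deriv (fun y => deriv u y ^ 2) = fun y => 2 * deriv u y * deriv (deriv u) y := by
    funext y
    have := ((hd1 y).fun_pow 2).deriv
    simpa using this
  have e2 : deriv (fun y => 2 * deriv u y * deriv (deriv u) y) x
      = 2 * (deriv (deriv u) x) ^ 2 + 2 * deriv u x * deriv (deriv (deriv u)) x := by
    have : HasDerivAt (fun y => 2 * deriv u y * deriv (deriv u) y)
        ((2 * deriv (deriv u) x) * deriv (deriv u) x
          + (2 * deriv u x) * deriv (deriv (deriv u)) x) x :=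
      (((hd1 x).const_mul 2).mul (hd2 x))
    rw [this.deriv]; ring
  rw [itd2, itd3, itd2, e1, e2]

/-- Core spatial estimate:
`∫ 3(u+m)² (-u'''' - ((u')²)'') ≤ -4∫ (u')⁴` for smooth periodic `u` with `u + m ≥ 0`. -/
lemma spatial_estimate {L : ℝ} (hL : 0 < L) {u : ℝ → ℝ} {m : ℝ}
    (hu : ContDiff ℝ ((⊤ : ℕ∞) : WithTop ℕ∞) u) (hper : Function.Periodic u L)
    (hpos : ∀ x, 0 ≤ u x + m) :
    (∫ x in (0:ℝ)..L, 3 * (u x + m) ^ 2 *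
      (-(iteratedDeriv 4 u x) - iteratedDeriv 2 (fun y => deriv u y ^ 2) x))
      ≤ -(4 * ∫ x in (0:ℝ)..L, deriv u x ^ 4) := by
  set u1 := deriv u with hu1def
  set u2 := deriv u1 with hu2def
  set u3 := deriv u2 with hu3def
  set u4 := deriv u3 with hu4def
  have hcu1 : ContDiff ℝ ((⊤ : ℕ∞) : WithTop ℕ∞) u1 := (contDiff_infty_iff_deriv.mp hu).2
  have hcu2 : ContDiff ℝ ((⊤ : ℕ∞) : WithTop ℕ∞) u2 := (contDiff_infty_iff_deriv.mp hcu1).2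
  have hcu3 : ContDiff ℝ ((⊤ : ℕ∞) : WithTop ℕ∞) u3 := (contDiff_infty_iff_deriv.mp hcu2).2
  have hcu4 : ContDiff ℝ ((⊤ : ℕ∞) : WithTop ℕ∞) u4 := (contDiff_infty_iff_deriv.mp hcu3).2
  have hd0 : ∀ y, HasDerivAt u (u1 y) y := fun y =>
    ((hu.differentiable (by simp)) y).hasDerivAt
  have hd1 : ∀ y, HasDerivAt u1 (u2 y) y := fun y =>
    ((hcu1.differentiable (by simp)) y).hasDerivAt
  have hd2 : ∀ y, HasDerivAt u2 (u3 y) y := fun y =>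
    ((hcu2.differentiable (by simp)) y).hasDerivAt
  have hd3 : ∀ y, HasDerivAt u3 (u4 y) y := fun y =>
    ((hcu3.differentiable (by simp)) y).hasDerivAt
  -- periodicity of derivatives
  have hp1 : Function.Periodic u1 L := deriv_periodic (hu.differentiable (by simp)) hper
  have hp2 : Function.Periodic u2 L := deriv_periodic (hcu1.differentiable (by simp)) hp1
  have hp3 : Function.Periodic u3 L := deriv_periodic (hcu2.differentiable (by simp)) hp2
  -- the potential W and its derivative E
  set v : ℝ → ℝ := fun x => u x + m with hvdef
  have hdv : ∀ y, HasDerivAt v (u1 y) y := fun y => (hd0 y).add_const m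
  set W : ℝ → ℝ := fun x =>
    -3 * v x ^ 2 * u3 x + 6 * v x * u1 x * u2 x - 2 * u1 x ^ 3
      - 6 * v x ^ 2 * u1 x * u2 x + 4 * v x * u1 x ^ 3 with hWdef
  set E : ℝ → ℝ := fun x =>
    -3 * v x ^ 2 * u4 x + 6 * v x * u2 x ^ 2 - 6 * v x ^ 2 * u2 x ^ 2
      - 6 * v x ^ 2 * u1 x * u3 x + 4 * u1 x ^ 4 with hEdef
  have hWderiv : ∀ x, HasDerivAt W (E x) x := by
    intro x
    have hv2 : HasDerivAt (fun y => v y ^ 2) (2 * v x * u1 x) x := by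
      simpa using (hdv x).fun_pow 2
    have hu1c : HasDerivAt (fun y => u1 y ^ 3) (3 * u1 x ^ 2 * u2 x) x := by
      simpa using (hd1 x).fun_pow 3
    have h1 : HasDerivAt (fun y => -3 * v y ^ 2 * u3 y)
        ((-3 * (2 * v x * u1 x)) * u3 x + (-3 * v x ^ 2) * u4 x) x :=
      (hv2.const_mul (-3)).mul (hd3 x)
    have h2 : HasDerivAt (fun y => 6 * v y * u1 y * u2 y)
        (((6 * u1 x) * u1 x + (6 * v x) * u2 x) * u2 x + (6 * v x * u1 x) * u3 x) x :=
      (((hdv x).const_mul 6).mul (hd1 x)).mul (hd2 x)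
    have h3 : HasDerivAt (fun y => 2 * u1 y ^ 3) (2 * (3 * u1 x ^ 2 * u2 x)) x :=
      hu1c.const_mul 2
    have h4 : HasDerivAt (fun y => 6 * v y ^ 2 * u1 y * u2 y)
        (((6 * (2 * v x * u1 x)) * u1 x + (6 * v x ^ 2) * u2 x) * u2 x
          + (6 * v x ^ 2 * u1 x) * u3 x) x :=
      (((hv2.const_mul 6).mul (hd1 x))).mul (hd2 x)
    have h5 : HasDerivAt (fun y => 4 * v y * u1 y ^ 3)
        ((4 * u1 x) * u1 x ^ 3 + (4 * v x) * (3 * u1 x ^ 2 * u2 x)) x :=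
      ((hdv x).const_mul 4).mul hu1c
    have := ((((h1.add h2).sub h3).sub h4).add h5)
    refine this.congr_deriv ?_
    simp only [hEdef]; ring
  -- rewrite the integrand
  have hintg : ∀ x, 3 * (u x + m) ^ 2 *
      (-(iteratedDeriv 4 u x) - iteratedDeriv 2 (fun y => deriv u y ^ 2) x)
      = E x - 6 * (v x * u2 x ^ 2) - 4 * u1 x ^ 4 := by
    intro x
    rw [iter2_sq hu, itd4]
    simp only [← hu1def, ← hu2def, ← hu3def, ← hu4def, hEdef, hvdef, itd2, itd3]
    ring
  have hEcont : Continuous E := by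
    apply Continuous.add
    apply Continuous.sub
    apply Continuous.sub
    apply Continuous.add
    · exact (((continuous_const.mul ((hu.continuous.add continuous_const).pow 2)).mul
        hcu4.continuous))
    · exact ((continuous_const.mul (hu.continuous.add continuous_const)).mul
        (hcu2.continuous.pow 2))
    · exact ((continuous_const.mul ((hu.continuous.add continuous_const).pow 2)).mul
        (hcu2.continuous.pow 2))
    · exact (((continuous_const.mul ((hu.continuous.add continuous_const).pow 2)).mul
        hcu1.continuous).mul hcu3.continuous)
    · exact continuous_const.mul (hcu1.continuous.pow 4)
  have hvu2cont : Continuous (fun x => v x * u2 x ^ 2) :=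
    (hu.continuous.add continuous_const).mul (hcu2.continuous.pow 2)
  have hu1cont : Continuous (fun x => u1 x ^ 4) := hcu1.continuous.pow 4
  -- ∫ E = W L - W 0 = 0
  have hWL : W L = W 0 := by
    have h0 : u L = u 0 := by simpa using hper 0
    have h1 : u1 L = u1 0 := by simpa using hp1 0
    have h2 : u2 L = u2 0 := by simpa using hp2 0
    have h3 : u3 L = u3 0 := by simpa using hp3 0
    simp only [hWdef, hvdef, h0, h1, h2, h3]
  have hintE : (∫ x in (0:ℝ)..L, E x) = 0 := by
    rw [intervalIntegral.integral_eq_sub_of_hasDerivAt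
      (fun x _ => hWderiv x) (hEcont.intervalIntegrable 0 L), hWL, sub_self]
  have hsplit : (∫ x in (0:ℝ)..L, 3 * (u x + m) ^ 2 *
      (-(iteratedDeriv 4 u x) - iteratedDeriv 2 (fun y => deriv u y ^ 2) x))
      = (∫ x in (0:ℝ)..L, E x) - 6 * (∫ x in (0:ℝ)..L, v x * u2 x ^ 2)
        - 4 * ∫ x in (0:ℝ)..L, u1 x ^ 4 := by
    rw [← intervalIntegral.integral_const_mul, ← intervalIntegral.integral_const_mul,
      ← intervalIntegral.integral_sub (hEcont.intervalIntegrable 0 L)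
        ((show Continuous fun x => 6 * (v x * u2 x ^ 2) from continuous_const.mul hvu2cont).intervalIntegrable 0 L),
      ← intervalIntegral.integral_sub
        ((hEcont.intervalIntegrable 0 L).sub ((show Continuous fun x => 6 * (v x * u2 x ^ 2) from continuous_const.mul hvu2cont).intervalIntegrable 0 L))
        ((show Continuous fun x => 4 * u1 x ^ 4 from continuous_const.mul hu1cont).intervalIntegrable 0 L)]
    exact intervalIntegral.integral_congr fun x _ => hintg x
  have hnonneg : 0 ≤ ∫ x in (0:ℝ)..L, v x * u2 x ^ 2 :=
    intervalIntegral.integral_nonneg hL.le fun x _ => mul_nonneg (hpos x) (sq_nonneg _)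
  rw [hsplit, hintE]
  have : (4:ℝ) * ∫ x in (0:ℝ)..L, deriv u x ^ 4 = 4 * ∫ x in (0:ℝ)..L, u1 x ^ 4 := by
    rw [hu1def]
  rw [this]
  nlinarith [hnonneg]

lemma inf_add_one_le : (((⊤ : ℕ∞) : WithTop ℕ∞) : WithTop ℕ∞) + 1 ≤ ((⊤ : ℕ∞) : WithTop ℕ∞) := by
  norm_num

/-- Joint smooth representatives of the spatial iterated derivatives. -/
lemma exists_joint_partial {τ : ℝ} {h : ℝ → ℝ → ℝ}
    (hs : ContDiffOn ℝ ((⊤ : ℕ∞) : WithTop ℕ∞) (fun p : ℝ × ℝ => h p.1 p.2) (Ioo (0:ℝ) τ ×ˢ (univ : Set ℝ)))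
    (n : ℕ) :
    ∃ g : ℝ × ℝ → ℝ, ContDiffOn ℝ ((⊤ : ℕ∞) : WithTop ℕ∞) g (Ioo (0:ℝ) τ ×ˢ (univ : Set ℝ)) ∧
      ∀ t ∈ Ioo (0:ℝ) τ, ∀ x : ℝ, iteratedDeriv n (h t) x = g (t, x) := by
  have hU : IsOpen (Ioo (0:ℝ) τ ×ˢ (univ : Set ℝ)) := isOpen_Ioo.prod isOpen_univ
  induction n with
  | zero =>
    exact ⟨fun p => h p.1 p.2, hs, fun t ht x => by simp [iteratedDeriv_zero]⟩
  | succ n ih =>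
    obtain ⟨g, hg, hgs⟩ := ih
    refine ⟨fun p => fderiv ℝ g p ((0:ℝ), (1:ℝ)), ?_, ?_⟩
    · exact ((ContinuousLinearMap.apply ℝ ℝ ((0:ℝ),(1:ℝ))).contDiff).comp_contDiffOn
        (hg.fderiv_of_isOpen hU inf_add_one_le)
    · intro t ht x
      have hmem : (t, x) ∈ Ioo (0:ℝ) τ ×ˢ (univ : Set ℝ) := ⟨ht, mem_univ x⟩
      have hdiff : DifferentiableAt ℝ g (t, x) :=
        ((hg.differentiableOn (by simp)).differentiableAt (hU.mem_nhds hmem))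
      have hc : HasDerivAt (fun y : ℝ => ((t, y) : ℝ × ℝ)) ((0:ℝ), (1:ℝ)) x :=
        (hasDerivAt_const x t).prodMk (hasDerivAt_id x)
      have hcomp : HasDerivAt (fun y => g (t, y)) (fderiv ℝ g (t, x) ((0:ℝ),(1:ℝ))) x :=
        hdiff.hasFDerivAt.comp_hasDerivAt x hc
      rw [iteratedDeriv_succ]
      have : iteratedDeriv n (h t) = fun y => g (t, y) := funext fun y => hgs t ht y
      rw [this, hcomp.deriv]

/-- If the solution is uniformly bounded below, the space-time integral of `(∂ₓh)⁴`
stays bounded, contradicting blow-up. -/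
lemma bounded_below_case (L : ℝ) (hL : 0 < L) (τ : ℝ) (hτ : 0 < τ) (h : ℝ → ℝ → ℝ)
    (hsmooth : ContDiffOn ℝ (⊤ : ℕ∞) (fun p : ℝ × ℝ => h p.1 p.2)
      (Set.Ico 0 τ ×ˢ (Set.univ : Set ℝ)))
    (hper : ∀ t ∈ Set.Ico (0:ℝ) τ, (∀ x : ℝ, h t (x + L) = h t x))
    (heq : ∀ t ∈ Set.Ioo (0:ℝ) τ, ∀ x : ℝ, HasDerivAt (fun τ' => h τ' x)
      (-(iteratedDeriv 4 (h t) x) - iteratedDeriv 2 (fun y => deriv (h t) y ^ 2) x) t)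
    (hblow : Tendsto (fun T => ∫ t in (0:ℝ)..T, ∫ x in (0:ℝ)..L, deriv (h t) x ^ 4)
      (nhdsWithin τ (Set.Iio τ)) atTop)
    (m : ℝ) (hm : ∀ t ∈ Set.Ico (0:ℝ) τ, ∀ x : ℝ, -m ≤ h t x) : False := by
  set U : Set (ℝ × ℝ) := Set.Ioo (0:ℝ) τ ×ˢ (Set.univ : Set ℝ) with hUdef
  have hUopen : IsOpen U := isOpen_Ioo.prod isOpen_univ
  have hsub : U ⊆ Set.Ico 0 τ ×ˢ (Set.univ : Set ℝ) :=
    Set.prod_mono Set.Ioo_subset_Ico_self (le_refl _)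
  have hs : ContDiffOn ℝ ((⊤ : ℕ∞) : WithTop ℕ∞) (fun p : ℝ × ℝ => h p.1 p.2) U :=
    (hsmooth.of_le (by simp)).mono hsub
  have hslice : ∀ t ∈ Set.Ico (0:ℝ) τ, ContDiff ℝ ((⊤ : ℕ∞) : WithTop ℕ∞) (h t) := by
    intro t ht
    have : ContDiffOn ℝ ((⊤ : ℕ∞) : WithTop ℕ∞) (h t) Set.univ :=
      (hsmooth.of_le (le_refl _)).comp
        ((contDiff_const.prodMk contDiff_id).contDiffOn (s := (Set.univ : Set ℝ)))
        (fun x _ => ⟨ht, Set.mem_univ x⟩)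
    exact contDiffOn_univ.mp this
  obtain ⟨g1, hg1, hg1s⟩ := exists_joint_partial hs 1
  obtain ⟨g2, hg2, hg2s⟩ := exists_joint_partial hs 2
  obtain ⟨g3, hg3, hg3s⟩ := exists_joint_partial hs 3
  obtain ⟨g4, hg4, hg4s⟩ := exists_joint_partial hs 4
  have hg1d : ∀ t ∈ Set.Ioo (0:ℝ) τ, ∀ x : ℝ, deriv (h t) x = g1 (t, x) := by
    intro t ht x
    rw [← iteratedDeriv_one]; exact hg1s t ht x
  set Dt : ℝ → ℝ → ℝ := fun t x =>
    -(iteratedDeriv 4 (h t) x) - iteratedDeriv 2 (fun y => deriv (h t) y ^ 2) x with hDtdef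
  set Φ : ℝ × ℝ → ℝ := fun p =>
    3 * (h p.1 p.2 + m) ^ 2 *
      (-(g4 p) - (2 * (g2 p) ^ 2 + 2 * (g1 p) * (g3 p))) with hΦdef
  have hΦcont : ContinuousOn Φ U := by
    apply ContinuousOn.mul
    · exact continuousOn_const.mul ((hs.continuousOn.add continuousOn_const).pow 2)
    · exact (hg4.continuousOn.neg).sub
        (((continuousOn_const.mul (hg2.continuousOn.pow 2))).add
          ((continuousOn_const.mul hg1.continuousOn).mul hg3.continuousOn))
  have hkey : ∀ t ∈ Set.Ioo (0:ℝ) τ, ∀ x : ℝ,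
      3 * (h t x + m) ^ 2 * Dt t x = Φ (t, x) := by
    intro t ht x
    have hts : t ∈ Set.Ico (0:ℝ) τ := Set.Ioo_subset_Ico_self ht
    have e2 := iter2_sq (hslice t hts) x
    simp only [hDtdef, hΦdef, e2, hg4s t ht x, hg1d t ht x,
      hg2s t ht x, hg3s t ht x]
  set G : ℝ → ℝ := fun t => ∫ x in (0:ℝ)..L, (h t x + m) ^ 3 with hGdef
  set I : ℝ → ℝ := fun t => ∫ x in (0:ℝ)..L, deriv (h t) x ^ 4 with hIdef
  have hposx : ∀ t ∈ Set.Ico (0:ℝ) τ, ∀ x : ℝ, 0 ≤ h t x + m := by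
    intro t ht x; have := hm t ht x; linarith
  -- a compact-neighborhood bound builder
  have hnbhd : ∀ t₀ ∈ Set.Ioo (0:ℝ) τ, ∃ δ > 0,
      Metric.ball t₀ δ ⊆ Set.Ioo (0:ℝ) τ ∧
      Set.Icc (t₀ - δ) (t₀ + δ) ⊆ Set.Ioo (0:ℝ) τ := by
    intro t₀ ht₀
    refine ⟨min t₀ (τ - t₀) / 2, ?_, ?_, ?_⟩
    · apply div_pos _ two_pos
      exact lt_min ht₀.1 (by linarith [ht₀.2])
    · intro t htb
      rw [Real.ball_eq_Ioo] at htb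
      have h1 : min t₀ (τ - t₀) / 2 ≤ t₀ / 2 := by
        have := min_le_left t₀ (τ - t₀); linarith
      have h2 : min t₀ (τ - t₀) / 2 ≤ (τ - t₀) / 2 := by
        have := min_le_right t₀ (τ - t₀); linarith
      exact ⟨by nlinarith [htb.1, ht₀.1], by nlinarith [htb.2, ht₀.2]⟩
    · intro t htb
      have h1 : min t₀ (τ - t₀) / 2 ≤ t₀ / 2 := by
        have := min_le_left t₀ (τ - t₀); linarith
      have h2 : min t₀ (τ - t₀) / 2 ≤ (τ - t₀) / 2 := by
        have := min_le_right t₀ (τ - t₀); linarith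
      exact ⟨by nlinarith [htb.1, ht₀.1], by nlinarith [htb.2, ht₀.2]⟩
  -- derivative of G, with the spatial estimate
  have hGderiv : ∀ t₀ ∈ Set.Ioo (0:ℝ) τ, ∃ y : ℝ,
      HasDerivAt G y t₀ ∧ y ≤ -(4 * I t₀) := by
    intro t₀ ht₀
    obtain ⟨δ, hδpos, hball, hIccsub⟩ := hnbhd t₀ ht₀
    have hKsub : Set.Icc (t₀ - δ) (t₀ + δ) ×ˢ Set.Icc (0:ℝ) L ⊆ U := by
      rintro ⟨t, x⟩ ⟨ht, hx⟩
      exact ⟨hIccsub ht, Set.mem_univ x⟩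
    obtain ⟨C, hC⟩ := ((isCompact_Icc.prod isCompact_Icc).exists_bound_of_continuousOn
      (hΦcont.mono hKsub))
    have main := intervalIntegral.hasDerivAt_integral_of_dominated_loc_of_deriv_le
      (F := fun t x => (h t x + m) ^ 3)
      (F' := fun t x => 3 * (h t x + m) ^ 2 * Dt t x)
      (a := (0:ℝ)) (b := L) (μ := volume) (x₀ := t₀) (bound := fun _ => C) (Metric.ball_mem_nhds t₀ hδpos)
      ?_ ?_ ?_ ?_ ?_ ?_
    · refine ⟨∫ x in (0:ℝ)..L, 3 * (h t₀ x + m) ^ 2 * Dt t₀ x, main.2, ?_⟩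
      have hts : t₀ ∈ Set.Ico (0:ℝ) τ := Set.Ioo_subset_Ico_self ht₀
      have := spatial_estimate hL (hslice t₀ hts) (hper t₀ hts)
        (hposx t₀ hts) (m := m)
      exact this
    · have hoo : ∀ᶠ t in 𝓝 t₀, t ∈ Set.Ioo (0:ℝ) τ := isOpen_Ioo.mem_nhds ht₀
      filter_upwards [hoo] with t ht
      have hts : t ∈ Set.Ico (0:ℝ) τ := Set.Ioo_subset_Ico_self ht
      exact (((hslice t hts).continuous.add continuous_const).pow 3).aestronglyMeasurable
    · exact ((((hslice t₀ (Set.Ioo_subset_Ico_self ht₀)).continuous.add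
        continuous_const).pow 3)).intervalIntegrable 0 L
    · show AEStronglyMeasurable (fun x => 3 * (h t₀ x + m) ^ 2 * Dt t₀ x)
        (volume.restrict (Set.uIoc 0 L))
      have heqf : (fun x => 3 * (h t₀ x + m) ^ 2 * Dt t₀ x) = fun x => Φ (t₀, x) :=
        funext fun x => hkey t₀ ht₀ x
      rw [heqf]
      have : Continuous fun x : ℝ => Φ (t₀, x) := by
        rw [← continuousOn_univ]
        exact hΦcont.comp ((continuous_const.prodMk continuous_id).continuousOn)
          (fun x _ => ⟨ht₀, Set.mem_univ x⟩)
      exact this.aestronglyMeasurable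
    · apply Filter.Eventually.of_forall
      intro x hx t htb
      have htI : t ∈ Set.Ioo (0:ℝ) τ := hball htb
      show ‖3 * (h t x + m) ^ 2 * Dt t x‖ ≤ C
      rw [hkey t htI x]
      apply hC
      constructor
      · rw [Real.ball_eq_Ioo] at htb
        exact ⟨htb.1.le, htb.2.le⟩
      · rw [Set.uIoc_of_le hL.le] at hx
        exact ⟨hx.1.le, hx.2⟩
    · exact intervalIntegrable_const
    · apply Filter.Eventually.of_forall
      intro x hx t htb
      have htI : t ∈ Set.Ioo (0:ℝ) τ := hball htb
      have hd : HasDerivAt (fun τ' => h τ' x + m) (Dt t x) t :=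
        (heq t htI x).add_const m
      have := hd.fun_pow 3
      refine this.congr_deriv ?_
      norm_num
  -- continuity of I on (0, τ)
  have hIcont : ∀ t₀ ∈ Set.Ioo (0:ℝ) τ, ContinuousAt I t₀ := by
    intro t₀ ht₀
    obtain ⟨δ, hδpos, hball, hIccsub⟩ := hnbhd t₀ ht₀
    have hKsub : Set.Icc (t₀ - δ) (t₀ + δ) ×ˢ Set.Icc (0:ℝ) L ⊆ U := by
      rintro ⟨t, x⟩ ⟨ht, hx⟩
      exact ⟨hIccsub ht, Set.mem_univ x⟩
    have hΨ : ContinuousOn (fun p : ℝ × ℝ => g1 p ^ 4) U := hg1.continuousOn.pow 4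
    obtain ⟨C, hC⟩ := ((isCompact_Icc.prod isCompact_Icc).exists_bound_of_continuousOn
      (hΨ.mono hKsub))
    apply intervalIntegral.continuousAt_of_dominated_interval
      (bound := fun _ => C)
    · have hoo : ∀ᶠ t in 𝓝 t₀, t ∈ Set.Ioo (0:ℝ) τ := isOpen_Ioo.mem_nhds ht₀
      filter_upwards [hoo] with t ht
      have hts : t ∈ Set.Ico (0:ℝ) τ := Set.Ioo_subset_Ico_self ht
      exact (((hslice t hts).continuous_deriv one_le_inf).pow 4).aestronglyMeasurable
    · have hoo : ∀ᶠ t in 𝓝 t₀, t ∈ Set.Ioo (0:ℝ) τ := isOpen_Ioo.mem_nhds ht₀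
      have hballev : ∀ᶠ t in 𝓝 t₀, t ∈ Metric.ball t₀ δ := Metric.ball_mem_nhds t₀ hδpos
      filter_upwards [hoo, hballev] with t ht htb
      apply Filter.Eventually.of_forall
      intro x hx
      rw [Real.norm_eq_abs]
      have : deriv (h t) x ^ 4 = g1 (t, x) ^ 4 := by rw [hg1d t ht x]
      rw [this, ← Real.norm_eq_abs]
      apply hC
      refine ⟨?_, ?_⟩
      · rw [Real.ball_eq_Ioo] at htb
        exact ⟨htb.1.le, htb.2.le⟩
      · rw [Set.uIoc_of_le hL.le] at hx
        exact ⟨hx.1.le, hx.2⟩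
    · exact intervalIntegrable_const
    · apply Filter.Eventually.of_forall
      intro x hx
      have hcg : ContinuousAt (fun t => g1 (t, x) ^ 4) t₀ := by
        have hmem : (t₀, x) ∈ U := ⟨ht₀, Set.mem_univ x⟩
        have h1 : ContinuousAt g1 (t₀, x) :=
          (hg1.continuousOn.continuousAt (hUopen.mem_nhds hmem))
        have h2 : ContinuousAt (fun t : ℝ => ((t, x) : ℝ × ℝ)) t₀ :=
          (continuous_id.prodMk continuous_const).continuousAt
        have h3 : ContinuousAt (fun t : ℝ => g1 (t, x)) t₀ := ContinuousAt.comp (f := fun t : ℝ => ((t, x) : ℝ × ℝ)) h1 h2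
        exact h3.pow 4
      apply hcg.congr
      have hoo : ∀ᶠ t in 𝓝 t₀, t ∈ Set.Ioo (0:ℝ) τ := isOpen_Ioo.mem_nhds ht₀
      filter_upwards [hoo] with t ht
      rw [hg1d t ht x]
  -- the weighted function and its antitonicity
  set ε : ℝ := τ / 2 with hεdef
  have hε : ε ∈ Set.Ioo (0:ℝ) τ := ⟨by positivity, by simp [hεdef]; linarith⟩
  have hIcontOn : ContinuousOn I (Set.Ioo (0:ℝ) τ) :=
    fun t ht => (hIcont t ht).continuousWithinAt
  set gfun : ℝ → ℝ := fun r => G r + 4 * ∫ s in ε..r, I s with hgfundef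
  have hderiv : ∀ t ∈ Set.Ioo (0:ℝ) τ, ∃ y : ℝ, HasDerivAt gfun y t ∧ y ≤ 0 := by
    intro t ht
    obtain ⟨y, hy, hyle⟩ := hGderiv t ht
    have huIcc : Set.uIcc ε t ⊆ Set.Ioo (0:ℝ) τ := by
      intro s hs
      rw [Set.uIcc_eq_union] at hs
      rcases hs with hs | hs
      · exact ⟨lt_of_lt_of_le hε.1 hs.1, lt_of_le_of_lt hs.2 ht.2⟩
      · exact ⟨lt_of_lt_of_le ht.1 hs.1, lt_of_le_of_lt hs.2 hε.2⟩
    have hint : IntervalIntegrable I volume ε t :=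
      (hIcontOn.mono huIcc).intervalIntegrable
    have hmeas : StronglyMeasurableAtFilter I (𝓝 t) volume :=
      ContinuousOn.stronglyMeasurableAtFilter isOpen_Ioo hIcontOn t ht
    have hW : HasDerivAt (fun r => ∫ s in ε..r, I s) (I t) t :=
      intervalIntegral.integral_hasDerivAt_right hint hmeas (hIcont t ht)
    have hIt : 0 ≤ I t :=
      intervalIntegral.integral_nonneg hL.le fun x _ => by positivity
    exact ⟨y + 4 * I t, hy.add (hW.const_mul 4), by linarith⟩
  have hGnonneg : ∀ T ∈ Set.Ico (0:ℝ) τ, 0 ≤ G T := by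
    intro T hT
    exact intervalIntegral.integral_nonneg hL.le fun x _ =>
      pow_nonneg (hposx T hT x) 3
  have hmain : ∀ T ∈ Set.Ico ε τ, 4 * ∫ s in ε..T, I s ≤ G ε := by
    intro T hT
    have hIccsub : Set.Icc ε T ⊆ Set.Ioo (0:ℝ) τ := by
      intro s hs
      exact ⟨lt_of_lt_of_le hε.1 hs.1, lt_of_le_of_lt hs.2 hT.2⟩
    have hant : AntitoneOn gfun (Set.Icc ε T) := by
      apply antitoneOn_of_deriv_nonpos (convex_Icc ε T)
      · intro t ht
        obtain ⟨y, hy, _⟩ := hderiv t (hIccsub ht)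
        exact hy.continuousAt.continuousWithinAt
      · intro t ht
        rw [interior_Icc] at ht
        obtain ⟨y, hy, _⟩ := hderiv t (hIccsub (Set.Ioo_subset_Icc_self ht))
        exact hy.differentiableAt.differentiableWithinAt
      · intro t ht
        rw [interior_Icc] at ht
        obtain ⟨y, hy, hle⟩ := hderiv t (hIccsub (Set.Ioo_subset_Icc_self ht))
        rw [hy.deriv]; exact hle
    have h1 : gfun T ≤ gfun ε :=
      hant (Set.left_mem_Icc.mpr hT.1) (Set.right_mem_Icc.mpr hT.1) hT.1
    have h2 : gfun ε = G ε := by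
      simp [hgfundef, intervalIntegral.integral_same]
    have h3 : 0 ≤ G T := hGnonneg T ⟨le_trans hε.1.le hT.1, hT.2⟩
    have h4 : gfun T = G T + 4 * ∫ s in ε..T, I s := rfl
    rw [h2, h4] at h1
    linarith
  -- final contradiction
  set A : ℝ := ∫ t in (0:ℝ)..ε, I t with hAdef
  have hblow' : Tendsto (fun T => ∫ t in (0:ℝ)..T, I t)
      (nhdsWithin τ (Set.Iio τ)) atTop := hblow
  have hbig : ∀ᶠ T in nhdsWithin τ (Set.Iio τ),
      |A| + |G ε| + 1 < ∫ t in (0:ℝ)..T, I t :=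
    hblow'.eventually (eventually_gt_atTop _)
  have hev2 : ∀ᶠ T in nhdsWithin τ (Set.Iio τ), T ∈ Set.Ioo ε τ :=
    Ioo_mem_nhdsLT_of_mem ⟨hε.2, le_refl τ⟩
  obtain ⟨T, hTbig, hTmem⟩ := (hbig.and hev2).exists
  by_cases hint0 : IntervalIntegrable I volume 0 ε
  · have hIccsub : Set.Icc ε T ⊆ Set.Ioo (0:ℝ) τ := by
      intro s hs
      exact ⟨lt_of_lt_of_le hε.1 hs.1, lt_of_le_of_lt hs.2 hTmem.2⟩
    have hintT : IntervalIntegrable I volume ε T := by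
      apply (hIcontOn.mono _).intervalIntegrable
      rwa [Set.uIcc_of_le hTmem.1.le]
    have hsplit : A + (∫ t in ε..T, I t) = ∫ t in (0:ℝ)..T, I t :=
      intervalIntegral.integral_add_adjacent_intervals hint0 hintT
    have h4 := hmain T ⟨hTmem.1.le, hTmem.2⟩
    have h5 : 0 ≤ G ε := hGnonneg ε (Set.Ioo_subset_Ico_self hε)
    have h6 : A ≤ |A| := le_abs_self A
    have h7 : G ε ≤ |G ε| := le_abs_self _
    have h8 : (∫ t in (0:ℝ)..T, I t) ≤ |A| + |G ε| := by
      rw [← hsplit]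
      have : (∫ t in ε..T, I t) ≤ G ε / 4 := by linarith
      have h9 : G ε / 4 ≤ |G ε| := by
        have := abs_nonneg (G ε); rw [abs_of_nonneg h5]; linarith
      linarith
    linarith
  · have hnot : ¬ IntervalIntegrable I volume 0 T := by
      intro hc
      apply hint0
      apply hc.mono_set
      rw [Set.uIcc_of_le hε.1.le, Set.uIcc_of_le (le_trans hε.1.le hTmem.1.le)]
      exact Set.Icc_subset_Icc (le_refl 0) hTmem.1.le
    rw [intervalIntegral.integral_undef hnot] at hTbig
    have := abs_nonneg A; have := abs_nonneg (G ε)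
    linarith

/-- The surface growth equation `∂_t h = -∂_x^4 h - ∂_x^2((∂_x h)^2)` holds
pointwise at time `t`. -/
def SGEq' (h : ℝ → ℝ → ℝ) (t : ℝ) : Prop :=
  ∀ x : ℝ, HasDerivAt (fun τ => h τ x)
    (-(iteratedDeriv 4 (h t) x) - iteratedDeriv 2 (fun y => deriv (h t) y ^ 2) x) t

theorem main_blowup (L : ℝ) (hL : 0 < L)
    (τ : ℝ) (hτ : 0 < τ) (h : ℝ → ℝ → ℝ)
    (hsmooth : ContDiffOn ℝ (⊤ : ℕ∞) (fun p : ℝ × ℝ => h p.1 p.2)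
      (Set.Ico 0 τ ×ˢ (Set.univ : Set ℝ)))
    (hper : ∀ t ∈ Set.Ico (0:ℝ) τ, (∀ x : ℝ, h t (x + L) = h t x))
    (heq : ∀ t ∈ Set.Ioo (0:ℝ) τ, SGEq' h t)
    (hblow : Tendsto (fun T => ∫ t in (0:ℝ)..T, ∫ x in (0:ℝ)..L, deriv (h t) x ^ 4)
      (nhdsWithin τ (Set.Iio τ)) atTop) :
    ∃ (tn : ℕ → ℝ) (xn : ℕ → ℝ),
      (∀ n, tn n ∈ Set.Ico (0:ℝ) τ) ∧ (∀ n, xn n ∈ Set.Icc (0:ℝ) L) ∧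
      Monotone tn ∧ Tendsto tn atTop (nhds τ) ∧
      Tendsto (fun n => h (tn n) (xn n)) atTop atBot := by
  by_cases hbdd : ∃ m : ℝ, ∀ t ∈ Set.Ico (0:ℝ) τ, ∀ x ∈ Set.Icc (0:ℝ) L, -m ≤ h t x
  · -- bounded below: contradiction with blow-up of the energy integral
    exfalso
    obtain ⟨m, hm⟩ := hbdd
    apply bounded_below_case L hL τ hτ h hsmooth hper (fun t ht x => heq t ht x) hblow m
    intro t ht x
    have hp : Function.Periodic (h t) L := hper t ht
    obtain ⟨y, hy, hxy⟩ := hp.exists_mem_Ico₀ hL x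
    rw [hxy]
    exact hm t ht y ⟨hy.1, hy.2.le⟩
  · -- unbounded below: construct the sequences
    push_neg at hbdd
    have key : ∀ (n : ℕ) (b : ℝ), b < τ →
        ∃ t, b < t ∧ t ∈ Set.Ico (0:ℝ) τ ∧ ∃ x ∈ Set.Icc (0:ℝ) L, h t x < -(n:ℝ) := by
      intro n b hb
      set b' : ℝ := max b 0 with hb'def
      have hb' : b' < τ := max_lt hb hτ
      have hKsub : Set.Icc (0:ℝ) b' ×ˢ Set.Icc (0:ℝ) L ⊆
          Set.Ico 0 τ ×ˢ (Set.univ : Set ℝ) := by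
        rintro ⟨t, x⟩ ⟨ht, hx⟩
        exact ⟨⟨ht.1, lt_of_le_of_lt ht.2 hb'⟩, Set.mem_univ x⟩
      obtain ⟨M, hM⟩ := (isCompact_Icc.prod isCompact_Icc).exists_bound_of_continuousOn
        ((hsmooth.continuousOn).mono hKsub)
      obtain ⟨t, ht, x, hx, hlt⟩ := hbdd (max M n)
      refine ⟨t, ?_, ht, x, hx, ?_⟩
      · by_contra hc
        push_neg at hc
        have htK : ((t, x) : ℝ × ℝ) ∈ Set.Icc (0:ℝ) b' ×ˢ Set.Icc (0:ℝ) L :=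
          ⟨⟨ht.1, le_trans hc (le_max_left b 0)⟩, hx⟩
        have := hM (t, x) htK
        rw [Real.norm_eq_abs] at this
        have h1 : -M ≤ h t x := neg_le_of_abs_le this
        have h2 : M ≤ max M n := le_max_left _ _
        linarith
      · have : (n:ℝ) ≤ max M n := le_max_right _ _
        linarith
    -- choice function
    set F : ℕ → ℝ → ℝ := fun n b => if hb : b < τ then (key n b hb).choose else 0 with hFdef
    have hFspec : ∀ (n : ℕ) (b : ℝ) (hb : b < τ), b < F n b ∧ F n b ∈ Set.Ico (0:ℝ) τ ∧
        ∃ x ∈ Set.Icc (0:ℝ) L, h (F n b) x < -(n:ℝ) := by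
      intro n b hb
      have : F n b = (key n b hb).choose := by rw [hFdef]; simp [hb]
      rw [this]
      exact (key n b hb).choose_spec
    set tn : ℕ → ℝ := fun n => Nat.rec (F 0 (max 0 (τ - 1)))
      (fun n t => F (n+1) (max t (τ - 1/(n+2)))) n with htndef
    have htn0 : tn 0 = F 0 (max 0 (τ - 1)) := rfl
    have htnsucc : ∀ n, tn (n+1) = F (n+1) (max (tn n) (τ - 1/(n+2))) := fun n => rfl
    have hQ : ∀ n, tn n ∈ Set.Ico (0:ℝ) τ ∧
        (∃ x ∈ Set.Icc (0:ℝ) L, h (tn n) x < -(n:ℝ)) ∧ τ - 1/(n+1) < tn n := by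
      intro n
      induction n with
      | zero =>
        have hb : max 0 (τ - 1) < τ := max_lt hτ (by linarith)
        obtain ⟨h1, h2, h3⟩ := hFspec 0 _ hb
        rw [htn0]
        refine ⟨h2, h3, ?_⟩
        have : τ - 1 ≤ max 0 (τ - 1) := le_max_right _ _
        push_cast
        linarith
      | succ n ih =>
        have hb : max (tn n) (τ - 1/(n+2)) < τ := by
          apply max_lt ih.1.2
          have : (0:ℝ) < 1/(n+2) := by positivity
          linarith
        obtain ⟨h1, h2, h3⟩ := hFspec (n+1) _ hb
        rw [htnsucc]
        refine ⟨h2, h3, ?_⟩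
        have : τ - 1/(n+2) ≤ max (tn n) (τ - 1/(n+2)) := le_max_right _ _
        have hxx : 1/((n:ℝ)+1+1) = 1/((n:ℝ)+2) := by rw [show ((n:ℝ)+1+1) = (n:ℝ)+2 by ring]
        push_cast
        push_cast at h1
        rw [hxx]
        linarith
    have hlt : ∀ n, tn n < tn (n+1) := by
      intro n
      have hb : max (tn n) (τ - 1/(n+2)) < τ := by
        apply max_lt (hQ n).1.2
        have : (0:ℝ) < 1/(n+2) := by positivity
        linarith
      have := (hFspec (n+1) _ hb).1
      rw [htnsucc]
      exact lt_of_le_of_lt (le_max_left _ _) this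
    refine ⟨tn, fun n => (hQ n).2.1.choose, fun n => (hQ n).1, 
      fun n => (hQ n).2.1.choose_spec.1, ?_, ?_, ?_⟩
    · exact monotone_nat_of_le_succ (fun n => (hlt n).le)
    · apply tendsto_of_tendsto_of_tendsto_of_le_of_le
        (g := fun n : ℕ => τ - 1/(n+1)) (h := fun _ : ℕ => τ)
      · have h0 : Tendsto (fun n : ℕ => 1/((n:ℝ)+1)) atTop (nhds 0) :=
          tendsto_one_div_add_atTop_nhds_zero_nat
        have := (tendsto_const_nhds (x := τ) (f := atTop)).sub h0
        simpa using this
      · exact tendsto_const_nhds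
      · exact fun n => (hQ n).2.2.le
      · exact fun n => (hQ n).1.2.le
    · apply tendsto_atBot_mono (fun n => ((hQ n).2.1.choose_spec.2).le)
      exact tendsto_neg_atTop_atBot.comp tendsto_natCast_atTop_atTop

end Aux

/-- If `∫₀^L h(0)³ dx` is finite and
`∫₀ᵀ∫₀^L (∂_x h)⁴ dx dt → ∞` as `T ↑ τ`, then the negative part of `h` blows up:
`h(t_n,x_n) → -∞` along suitable `t_n ↑ τ`, `x_n ∈ [0,L]`. -/
theorem surfaceGrowth_blowup_to_minus_infinity (L : ℝ) (hL : 0 < L)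
    (τ : ℝ) (hτ : 0 < τ) (h : ℝ → ℝ → ℝ)
    (hsmooth : ContDiffOn ℝ (⊤ : ℕ∞) (fun p : ℝ × ℝ => h p.1 p.2)
      (Set.Ico 0 τ ×ˢ (Set.univ : Set ℝ)))
    (hper : ∀ t ∈ Set.Ico (0:ℝ) τ, PeriodicZeroMean L (h t))
    (heq : ∀ t ∈ Set.Ioo (0:ℝ) τ, SGEq h t)
    (hcube : IntervalIntegrable (fun x => h 0 x ^ 3) volume 0 L)
    (hblow : Tendsto (fun T => ∫ t in (0:ℝ)..T, ∫ x in (0:ℝ)..L, deriv (h t) x ^ 4)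
      (nhdsWithin τ (Set.Iio τ)) atTop) :
    ∃ (tn : ℕ → ℝ) (xn : ℕ → ℝ),
      (∀ n, tn n ∈ Set.Ico (0:ℝ) τ) ∧ (∀ n, xn n ∈ Set.Icc (0:ℝ) L) ∧
      Monotone tn ∧ Tendsto tn atTop (nhds τ) ∧
      Tendsto (fun n => h (tn n) (xn n)) atTop atBot := by
  exact main_blowup L hL τ hτ h hsmooth (fun t ht => (hper t ht).1)
    (fun t ht x => heq t ht x) hblow
end
end

section
/- Let real numbers α, β, γ satisfy Condition (C), and additionally assume that if γ < 0 then α ≤ 1/2 or β ≥ −γ. Then there is a constant c > 0 such that for every m ∈ ℤ with m ≠ 0, Σ |k−m|^{−2α} |k|^{−2γ} ≤ c |m|^{2β}, where the sum is over all k ∈ ℤ with |k| < 2|m| and 0 < |k−m| < |k|/2. -/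
open MeasureTheory Filter Topology Set
open scoped ENNReal
noncomputable section

/-- Condition (C) on the exponents `α`, `β`, `γ`. -/
def CondC (α β γ : ℝ) : Prop :=
  0 ≤ α ∧ 0 ≤ β ∧ 1 / 2 ≤ α + β + γ ∧
  ((α = 1 / 2 ∨ β = 1 / 2 ∨ γ = 1 / 2) → 1 / 2 < α + β + γ) ∧
  (γ < 0 → α ≤ 1 / 2 ∨ β ≤ 1 / 2 ∨ -γ ≤ α ∨ -γ ≤ β)

/-!
On the summation region `|k|` is comparable to `|m|` (`2|m|/3 ≤ |k| ≤ 2|m|`) and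
`1 ≤ |k - m| ≤ |m|`, while each value of `|k - m|` is taken at most twice. Hence the sum is
at most a constant times `|m|^{-2γ} ∑_{n=1}^{|m|} n^{-2α}`. The hypotheses give
`2β + 2γ ≥ 0` and either `2α > 1`, when the partial sums are bounded, or `2β + 2γ > 0` and
`2α + 2β + 2γ ≥ 1`. In the latter case `n^{-2α} ≤ n^{-p}` for `p = max 0 (1 - 2β - 2γ) < 1`,
and telescoping Bernoulli's inequality `(x - 1)^{1-p} ≤ x^{1-p} - (1 - p) x^{-p}` bounds
`∑_{n ≤ N} n^{-p}` by `N^{1-p} / (1 - p) ≤ N^{2β+2γ} / (1 - p)`.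
-/

open Finset

lemma rpow_le_rpow_add_rpow_of_mem_Icc {a b x : ℝ} (s : ℝ) (ha : 0 < a) (hax : a ≤ x)
    (hxb : x ≤ b) : x ^ s ≤ a ^ s + b ^ s := by
  rcases le_total 0 s with hs | hs
  · exact (Real.rpow_le_rpow (ha.le.trans hax) hxb hs).trans
      (le_add_of_nonneg_left (Real.rpow_nonneg ha.le _))
  · exact (Real.rpow_le_rpow_of_nonpos ha hax hs).trans
      (le_add_of_nonneg_right (Real.rpow_nonneg (by linarith) _))

lemma mul_rpow_neg_le_rpow_sub_rpow_sub_one {x p : ℝ} (hx : 1 ≤ x) (hp0 : 0 ≤ p)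
    (hp1 : p ≤ 1) : (1 - p) * x ^ (-p) ≤ x ^ (1 - p) - (x - 1) ^ (1 - p) := by
  have hx0 : 0 < x := by linarith
  have hx1 : x - 1 = x * (1 + -x⁻¹) := by field_simp; ring
  have hbern : (1 + -x⁻¹) ^ (1 - p) ≤ 1 + (1 - p) * -x⁻¹ :=
    rpow_one_add_le_one_add_mul_self (by linarith [inv_le_one_of_one_le₀ hx]) (by linarith)
      (by linarith)
  have hsplit : x ^ (1 - p) = x * x ^ (-p) := by
    rw [sub_eq_add_neg, Real.rpow_add hx0, Real.rpow_one]
  calc (1 - p) * x ^ (-p) = x ^ (1 - p) - x ^ (1 - p) * (1 + (1 - p) * -x⁻¹) := by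
        rw [hsplit]; field_simp; ring
    _ ≤ x ^ (1 - p) - x ^ (1 - p) * (1 + -x⁻¹) ^ (1 - p) := by
        gcongr
    _ = x ^ (1 - p) - (x - 1) ^ (1 - p) := by
        rw [hx1, Real.mul_rpow hx0.le (by linarith [inv_le_one_of_one_le₀ hx])]

lemma sum_Icc_rpow_neg_le {p : ℝ} (hp0 : 0 ≤ p) (hp1 : p < 1) (N : ℕ) :
    ∑ n ∈ Icc 1 N, (n : ℝ) ^ (-p) ≤ (1 - p)⁻¹ * (N : ℝ) ^ (1 - p) := by
  induction N with
  | zero => simp [Real.zero_rpow (sub_ne_zero.mpr hp1.ne')]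
  | succ N ih =>
    have hstep := mul_rpow_neg_le_rpow_sub_rpow_sub_one (x := N + 1)
      (by linarith [N.cast_nonneg (α := ℝ)]) hp0 hp1.le
    rw [add_sub_cancel_right] at hstep
    rw [sum_Icc_succ_top (by omega), le_inv_mul_iff₀ (by linarith)]
    rw [le_inv_mul_iff₀ (by linarith)] at ih
    push_cast
    linarith

lemma exists_sum_Icc_rpow_neg_le_mul_rpow {q r : ℝ} (hq : 0 ≤ q) (hr : 0 ≤ r)
    (hqr : 1 < q ∨ 0 < r ∧ 1 ≤ q + r) :
    ∃ C > 0, ∀ N : ℕ, ∑ n ∈ Icc 1 N, (n : ℝ) ^ (-q) ≤ C * (N : ℝ) ^ r := by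
  rcases hqr with hq1 | ⟨hr0, hqr⟩
  · have hsum : Summable fun n : ℕ => (n : ℝ) ^ (-q) :=
      Real.summable_nat_rpow.mpr (by linarith)
    have hpos : 0 < ∑' n : ℕ, (n : ℝ) ^ (-q) :=
      hsum.tsum_pos (fun n => Real.rpow_nonneg n.cast_nonneg _) 1 (by norm_num)
    refine ⟨_, hpos, fun N => ?_⟩
    rcases N.eq_zero_or_pos with rfl | hN
    · simpa using mul_nonneg hpos.le (Real.rpow_nonneg le_rfl r)
    calc ∑ n ∈ Icc 1 N, (n : ℝ) ^ (-q) ≤ ∑' n : ℕ, (n : ℝ) ^ (-q) :=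
          hsum.sum_le_tsum _ fun n _ => Real.rpow_nonneg n.cast_nonneg _
      _ ≤ (∑' n : ℕ, (n : ℝ) ^ (-q)) * (N : ℝ) ^ r :=
          le_mul_of_one_le_right hpos.le (Real.one_le_rpow (by exact_mod_cast hN) hr)
  · set p := max 0 (1 - r)
    have hp1 : p < 1 := max_lt one_pos (by linarith)
    refine ⟨(1 - p)⁻¹, inv_pos.mpr (by linarith), fun N => ?_⟩
    calc ∑ n ∈ Icc 1 N, (n : ℝ) ^ (-q) ≤ ∑ n ∈ Icc 1 N, (n : ℝ) ^ (-p) := by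
          refine sum_le_sum fun n hn => Real.rpow_le_rpow_of_exponent_le ?_ ?_
          · exact_mod_cast (mem_Icc.mp hn).1
          · exact neg_le_neg (max_le hq (by linarith))
      _ ≤ (1 - p)⁻¹ * (N : ℝ) ^ (1 - p) := sum_Icc_rpow_neg_le (le_max_left _ _) hp1 N
      _ ≤ (1 - p)⁻¹ * (N : ℝ) ^ r := by
          rcases N.eq_zero_or_pos with rfl | hN
          · simp [Real.zero_rpow (sub_ne_zero.mpr hp1.ne'), Real.zero_rpow hr0.ne']
          gcongr
          · exact_mod_cast hN
          · linarith [le_max_right 0 (1 - r)]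

lemma sum_comp_natAbs_sub_le (f : ℕ → ℝ) (hf : ∀ n, 0 ≤ f n) (s : Finset ℤ) (m : ℤ) (N : ℕ)
    (hs : ∀ k ∈ s, (k - m).natAbs ∈ Finset.Icc 1 N) :
    ∑ k ∈ s, f (k - m).natAbs ≤ 2 * ∑ n ∈ Finset.Icc 1 N, f n := by
  have hfiber (n : ℕ) : #{k ∈ s | (k - m).natAbs = n} ≤ 2 := by
    refine (Finset.card_le_card fun k hk => ?_).trans (card_le_two (a := m + ↑n) (b := m - ↑n))
    have := (mem_filter.mp hk).2
    simp only [Finset.mem_insert, Finset.mem_singleton]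
    omega
  calc ∑ k ∈ s, f (k - m).natAbs
      = ∑ n ∈ s.image (fun k => (k - m).natAbs), #{k ∈ s | (k - m).natAbs = n} • f n :=
        sum_comp f _
    _ ≤ ∑ n ∈ s.image (fun k => (k - m).natAbs), 2 * f n := by
        refine sum_le_sum fun n _ => ?_
        rw [nsmul_eq_mul]
        exact mul_le_mul_of_nonneg_right (by exact_mod_cast hfiber n) (hf n)
    _ ≤ ∑ n ∈ Finset.Icc 1 N, 2 * f n := by
        refine sum_le_sum_of_subset_of_nonneg ?_ fun n _ _ => mul_nonneg zero_le_two (hf n)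
        simpa [subset_iff] using hs
    _ = 2 * ∑ n ∈ Finset.Icc 1 N, f n := (mul_sum ..).symm

def convRegion (m : ℤ) : Finset ℤ :=
  (Finset.Icc (-(2 * (m.natAbs : ℤ))) (2 * (m.natAbs : ℤ))).filter
    (fun k => |k| < 2 * |m| ∧ 0 < |k - m| ∧ 2 * |k - m| < |k|)

lemma natAbs_bounds_of_mem_convRegion {m k : ℤ} (hk : k ∈ convRegion m) :
    (k - m).natAbs ∈ Finset.Icc 1 m.natAbs ∧ 2 * m.natAbs ≤ 3 * k.natAbs ∧
      k.natAbs ≤ 2 * m.natAbs := by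
  simp only [convRegion, mem_filter, Finset.mem_Icc, Int.abs_eq_natAbs] at hk ⊢
  omega

lemma sum_convRegion_le (s t : ℝ) (m : ℤ) :
    ∑ k ∈ convRegion m, |(k : ℝ) - m| ^ s * |(k : ℝ)| ^ t
      ≤ 2 * ((2 / 3) ^ t + 2 ^ t) * |(m : ℝ)| ^ t *
        ∑ n ∈ Finset.Icc 1 m.natAbs, (n : ℝ) ^ s := by
  set K := ((2 / 3 : ℝ) ^ t + 2 ^ t) * |(m : ℝ)| ^ t
  have hterm (k : ℤ) (hk : k ∈ convRegion m) : |(k : ℝ)| ^ t ≤ K := by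
    obtain ⟨hkm, hlo, hhi⟩ := natAbs_bounds_of_mem_convRegion hk
    have hm : (0 : ℝ) < m.natAbs := by
      exact_mod_cast (Finset.mem_Icc.mp hkm).1.trans (Finset.mem_Icc.mp hkm).2
    have hlo' : 2 / 3 * (m.natAbs : ℝ) ≤ k.natAbs := by
      have : 2 * (m.natAbs : ℝ) ≤ 3 * k.natAbs := by exact_mod_cast hlo
      linarith
    have hhi' : (k.natAbs : ℝ) ≤ 2 * m.natAbs := by exact_mod_cast hhi
    have := rpow_le_rpow_add_rpow_of_mem_Icc t (by positivity) hlo' hhi'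
    rw [Real.mul_rpow (by norm_num) hm.le, Real.mul_rpow (by norm_num) hm.le] at this
    simp only [Nat.cast_natAbs, Int.cast_abs] at this
    linarith
  calc ∑ k ∈ convRegion m, |(k : ℝ) - m| ^ s * |(k : ℝ)| ^ t
      ≤ ∑ k ∈ convRegion m, ((k - m).natAbs : ℝ) ^ s * K := by
        refine sum_le_sum fun k hk => ?_
        rw [Nat.cast_natAbs, Int.cast_abs, Int.cast_sub]
        exact mul_le_mul_of_nonneg_left (hterm k hk) (by positivity)
    _ = (∑ k ∈ convRegion m, ((k - m).natAbs : ℝ) ^ s) * K := (sum_mul ..).symm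
    _ ≤ (2 * ∑ n ∈ Finset.Icc 1 m.natAbs, (n : ℝ) ^ s) * K := by
        gcongr
        exact sum_comp_natAbs_sub_le (fun n => (n : ℝ) ^ s) (fun n => by positivity) _ m _
          fun k hk => (natAbs_bounds_of_mem_convRegion hk).1
    _ = _ := by ring

lemma CondC.partialSum_exponents {α β γ : ℝ} (hC : CondC α β γ)
    (hextra : γ < 0 → α ≤ 1 / 2 ∨ -γ ≤ β) :
    0 ≤ 2 * β + 2 * γ ∧ (1 < 2 * α ∨ 0 < 2 * β + 2 * γ ∧ 1 ≤ 2 * α + (2 * β + 2 * γ)) := by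
  obtain ⟨-, hβ, hsum, hstrict, -⟩ := hC
  have hβγ : 0 ≤ β + γ := by
    rcases lt_or_ge γ 0 with hγ | hγ
    · rcases hextra hγ with h | h <;> linarith
    · linarith
  refine ⟨by linarith, ?_⟩
  rcases lt_or_ge 1 (2 * α) with hα | hα
  · exact .inl hα
  · refine .inr ⟨?_, by linarith⟩
    by_contra! h
    linarith [hstrict (.inl (by linarith))]

/-- Under Condition (C) (with `α ≤ 1/2` or `β ≥ -γ` when `γ < 0`),
`Σ_{|k|<2|m|, 0<|k-m|<|k|/2} |k-m|^{-2α}|k|^{-2γ} ≤ c |m|^{2β}` uniformly in `m ≠ 0`. -/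
theorem surfaceGrowth_convolution_sum_estimate (α β γ : ℝ) (hC : CondC α β γ)
    (hextra : γ < 0 → α ≤ 1 / 2 ∨ -γ ≤ β) :
    ∃ c > (0:ℝ), ∀ m : ℤ, m ≠ 0 →
      ∑ k ∈ (Finset.Icc (-(2 * (m.natAbs : ℤ))) (2 * (m.natAbs : ℤ))).filter
          (fun k => |k| < 2 * |m| ∧ 0 < |k - m| ∧ 2 * |k - m| < |k|),
        |(k : ℝ) - (m : ℝ)| ^ (-(2 * α)) * |(k : ℝ)| ^ (-(2 * γ))
      ≤ c * |(m : ℝ)| ^ (2 * β) := by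
  obtain ⟨hr, hqr⟩ := hC.partialSum_exponents hextra
  obtain ⟨C, hC₀, hpartial⟩ :=
    exists_sum_Icc_rpow_neg_le_mul_rpow (by linarith [hC.1]) hr hqr
  set K := 2 * ((2 / 3 : ℝ) ^ (-(2 * γ)) + 2 ^ (-(2 * γ)))
  refine ⟨K * C, by positivity, fun m hm => ?_⟩
  have hexp : |(m : ℝ)| ^ (-(2 * γ)) * |(m : ℝ)| ^ (2 * β + 2 * γ) = |(m : ℝ)| ^ (2 * β) := by
    rw [← Real.rpow_add (by positivity)]; ring_nf
  calc _ ≤ K * |(m : ℝ)| ^ (-(2 * γ)) * ∑ n ∈ Finset.Icc 1 m.natAbs, (n : ℝ) ^ (-(2 * α)) :=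
        sum_convRegion_le _ _ m
    _ ≤ K * |(m : ℝ)| ^ (-(2 * γ)) * (C * |(m : ℝ)| ^ (2 * β + 2 * γ)) := by
        gcongr
        simpa using hpartial m.natAbs
    _ = K * C * |(m : ℝ)| ^ (2 * β) := by
        rw [← hexp]; ring
end
end
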